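/- Constrained optimization shrinks uncertainty: let A ≻ 0 be n×n, and let W₁, W₂ have orthonormal columns with range(W₂) ⊆ range(W₁). Then the degenerate covariances Σᵢ = Wᵢ(WᵢᵀAWᵢ)⁻¹Wᵢᵀ satisfy Σ₁ ⪰ Σ₂ in the Loewner order restricted to range(W₂), i.e., for every v ∈ range(W₂), vᵀΣ₂v ≤ vᵀΣ₁v. -/

import Mathlib

/-!
The quadratic form of the constrained covariance is a maximum over the constraint subspace:
`vᵀ W (WᵀAW)⁻¹ Wᵀ v = max_{y ∈ col W} (2 vᵀy - yᵀAy)`, the maximum being attained at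
`y = W (WᵀAW)⁻¹ Wᵀ v` and bounded by completing the square when `A ≻ 0` and `W` is injective.
Enlarging the subspace from `col W₂` to `col W₁` can only increase the maximum.
-/

open Matrix

namespace Matrix

variable {m k : Type*} [Fintype m] [Fintype k]

theorem dotProduct_transpose_mul_mul_mulVec {R : Type*} [CommSemiring R] (A : Matrix m m R)
    (W : Matrix m k R) (x : k → R) :
    x ⬝ᵥ (Wᵀ * A * W) *ᵥ x = (W *ᵥ x) ⬝ᵥ A *ᵥ (W *ᵥ x) := by
  rw [← mulVec_mulVec, ← mulVec_mulVec, dotProduct_mulVec, vecMul_transpose]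

theorem dotProduct_mul_mul_transpose_mulVec {R : Type*} [CommSemiring R] (M : Matrix k k R)
    (W : Matrix m k R) (v : m → R) :
    v ⬝ᵥ (W * M * Wᵀ) *ᵥ v = (Wᵀ *ᵥ v) ⬝ᵥ M *ᵥ (Wᵀ *ᵥ v) := by
  simpa only [transpose_transpose] using dotProduct_transpose_mul_mul_mulVec M Wᵀ v

variable [DecidableEq k]

theorem mulVec_injective_of_mul_eq_one {R : Type*} [CommSemiring R] {B : Matrix k m R}
    {W : Matrix m k R} (h : B * W = 1) : Function.Injective W.mulVec :=
  fun x y hxy => by simpa only [mulVec_mulVec, h, one_mulVec] using congrArg (B *ᵥ ·) hxy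

theorem dotProduct_inv_mulVec_mulVec_inv_mulVec {R : Type*} [CommRing R] (B : Matrix k k R)
    (u : k → R) : (B⁻¹ *ᵥ u) ⬝ᵥ B *ᵥ (B⁻¹ *ᵥ u) = u ⬝ᵥ B⁻¹ *ᵥ u := by
  rw [dotProduct_comm u]
  rcases nonsing_inv_cancel_or_zero B with ⟨-, hinv⟩ | hinv
  · rw [mulVec_mulVec, hinv, one_mulVec]
  · simp only [hinv, zero_mulVec, zero_dotProduct]

theorem PosDef.two_mul_dotProduct_sub_le {B : Matrix k k ℝ} (hB : B.PosDef) (u w : k → ℝ) :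
    2 * (w ⬝ᵥ u) - w ⬝ᵥ B *ᵥ w ≤ u ⬝ᵥ B⁻¹ *ᵥ u := by
  set p := B⁻¹ *ᵥ u
  have hBp : B *ᵥ p = u := by
    rw [mulVec_mulVec, mul_nonsing_inv B ((isUnit_iff_isUnit_det B).mp hB.isUnit),
      one_mulVec]
  have hsymm : p ⬝ᵥ B *ᵥ w = w ⬝ᵥ u := by
    rw [dotProduct_mulVec, ← mulVec_transpose, ← conjTranspose_eq_transpose_of_trivial,
      hB.isHermitian.eq, hBp, dotProduct_comm]
  have hsq : 0 ≤ (w - p) ⬝ᵥ B *ᵥ (w - p) := by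
    simpa only [star_trivial] using hB.posSemidef.dotProduct_mulVec_nonneg (w - p)
  rw [mulVec_sub, sub_dotProduct, dotProduct_sub, dotProduct_sub, hBp, hsymm] at hsq
  have hpu : p ⬝ᵥ u = u ⬝ᵥ B⁻¹ *ᵥ u := dotProduct_comm p u
  linarith

theorem exists_two_mul_dotProduct_mulVec_sub_eq {R : Type*} [CommRing R] (A : Matrix m m R)
    (W : Matrix m k R) (v : m → R) :
    ∃ x, 2 * (v ⬝ᵥ W *ᵥ x) - (W *ᵥ x) ⬝ᵥ A *ᵥ (W *ᵥ x) =
      v ⬝ᵥ (W * (Wᵀ * A * W)⁻¹ * Wᵀ) *ᵥ v := by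
  refine ⟨(Wᵀ * A * W)⁻¹ *ᵥ (Wᵀ *ᵥ v), ?_⟩
  rw [← dotProduct_transpose_mul_mul_mulVec, dotProduct_inv_mulVec_mulVec_inv_mulVec,
    dotProduct_mulVec v, ← mulVec_transpose, dotProduct_mul_mul_transpose_mulVec]
  ring

theorem PosDef.two_mul_dotProduct_mulVec_sub_le {A : Matrix m m ℝ} (hA : A.PosDef)
    {W : Matrix m k ℝ} (hW : Function.Injective W.mulVec) (v : m → ℝ) (x : k → ℝ) :
    2 * (v ⬝ᵥ W *ᵥ x) - (W *ᵥ x) ⬝ᵥ A *ᵥ (W *ᵥ x) ≤ v ⬝ᵥ (W * (Wᵀ * A * W)⁻¹ * Wᵀ) *ᵥ v := by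
  have hB : (Wᵀ * A * W).PosDef := by
    simpa only [conjTranspose_eq_transpose_of_trivial] using hA.conjTranspose_mul_mul_same hW
  rw [dotProduct_mul_mul_transpose_mulVec, ← dotProduct_transpose_mul_mul_mulVec,
    dotProduct_mulVec, ← mulVec_transpose, dotProduct_comm]
  exact hB.two_mul_dotProduct_sub_le _ x

end Matrix

theorem stmt19_general (n k₁ k₂ : ℕ) (A : Matrix (Fin n) (Fin n) ℝ) (hA : A.PosDef)
    (W₁ : Matrix (Fin n) (Fin k₁) ℝ) (W₂ : Matrix (Fin n) (Fin k₂) ℝ)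
    (hW₁ : W₁ᵀ * W₁ = 1)
    (hsub : LinearMap.range W₂.mulVecLin ≤ LinearMap.range W₁.mulVecLin)
    (S₁ S₂ : Matrix (Fin n) (Fin n) ℝ)
    (hS₁ : S₁ = W₁ * (W₁ᵀ * A * W₁)⁻¹ * W₁ᵀ) (hS₂ : S₂ = W₂ * (W₂ᵀ * A * W₂)⁻¹ * W₂ᵀ) :
    ∀ v : Fin n → ℝ, v ∈ LinearMap.range W₂.mulVecLin →
      v ⬝ᵥ S₂.mulVec v ≤ v ⬝ᵥ S₁.mulVec v := by
  intro v _
  obtain ⟨x, hx⟩ := exists_two_mul_dotProduct_mulVec_sub_eq A W₂ v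
  obtain ⟨y, hy⟩ : W₂ *ᵥ x ∈ LinearMap.range W₁.mulVecLin := hsub ⟨x, rfl⟩
  rw [mulVecLin_apply] at hy
  rw [hS₁, hS₂, ← hx, ← hy]
  exact hA.two_mul_dotProduct_mulVec_sub_le (mulVec_injective_of_mul_eq_one hW₁) v y

/-- Constraining shrinks uncertainty: for `A ≻ 0` and `W₁, W₂` with orthonormal columns and
`col(W₂) ⊆ col(W₁)`, the degenerate covariances `Σᵢ = Wᵢ(WᵢᵀAWᵢ)⁻¹Wᵢᵀ` satisfy
`vᵀ Σ₂ v ≤ vᵀ Σ₁ v` for every `v` in the column space of `W₂`. -/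
theorem stmt19 (n k₁ k₂ : ℕ) (A : Matrix (Fin n) (Fin n) ℝ) (hA : A.PosDef)
    (W₁ : Matrix (Fin n) (Fin k₁) ℝ) (W₂ : Matrix (Fin n) (Fin k₂) ℝ)
    (hW₁ : W₁ᵀ * W₁ = 1) (hW₂ : W₂ᵀ * W₂ = 1)
    (hsub : LinearMap.range W₂.mulVecLin ≤ LinearMap.range W₁.mulVecLin)
    (S₁ S₂ : Matrix (Fin n) (Fin n) ℝ)
    (hS₁ : S₁ = W₁ * (W₁ᵀ * A * W₁)⁻¹ * W₁ᵀ) (hS₂ : S₂ = W₂ * (W₂ᵀ * A * W₂)⁻¹ * W₂ᵀ) :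
    ∀ v : Fin n → ℝ, v ∈ LinearMap.range W₂.mulVecLin →
      v ⬝ᵥ S₂.mulVec v ≤ v ⬝ᵥ S₁.mulVec v :=
  stmt19_general n k₁ k₂ A hA W₁ W₂ hW₁ hsub S₁ S₂ hS₁ hS₂
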